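/- Let H be a complex Hilbert space, r > 0 a real number, and A a bounded linear operator on H such that A ∘ A† = A† ∘ A = r • id, where A† is the adjoint of A. Fix φ ∈ H and N ∈ ℕ, and let H_N be the linear span of {Aⁱ((A†)ʲ(φ)) : i ≤ N, j ≤ N}, H_N⁻ the span of {Aⁱ((A†)ʲ(φ)) : i < N, j ≤ N}, and H_N⁺ the span of {Aⁱ((A†)ʲ(φ)) : 1 ≤ i ≤ N, j ≤ N}. Then there exists a linear operator T on the finite-dimensional inner-product space H_N such that T† ∘ T = T ∘ T† = r • id (with T† the adjoint of T within H_N), T(x) = A(x) for every x ∈ H_N⁻, and T†(x) = A†(x) for every x ∈ H_N⁺. -/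

import Mathlib

/-!
Since `A† A = r`, the map `A / √r` is isometric; `A` sends `H_N⁻` into `H_N`, so this
restriction extends to a linear isometry `U` of `H_N`, which is unitary because `H_N` is
finite-dimensional. Then `T = √r U` works, and `H_N⁺ ⊆ A(H_N⁻)` gives the adjoint condition:
`T† (A y) = T† (T y) = r y = A† (A y)`.
-/

open ContinuousLinearMap

/-- The subspace `H_N` spanned by `Aⁱ (A†)ʲ φ` for `i ≤ N`, `j ≤ N`. -/
def HN {H : Type*} [NormedAddCommGroup H] [InnerProductSpace ℂ H] [CompleteSpace H]
    (A : H →L[ℂ] H) (φ : H) (N : ℕ) : Submodule ℂ H :=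
  Submodule.span ℂ {x : H | ∃ i ≤ N, ∃ j ≤ N, x = (A ^ i) (((adjoint A) ^ j) φ)}

/-- The subspace `H_N⁻` spanned by `Aⁱ (A†)ʲ φ` for `i < N`, `j ≤ N`. -/
def HNminus {H : Type*} [NormedAddCommGroup H] [InnerProductSpace ℂ H] [CompleteSpace H]
    (A : H →L[ℂ] H) (φ : H) (N : ℕ) : Submodule ℂ H :=
  Submodule.span ℂ {x : H | ∃ i < N, ∃ j ≤ N, x = (A ^ i) (((adjoint A) ^ j) φ)}

/-- The subspace `H_N⁺` spanned by `Aⁱ (A†)ʲ φ` for `1 ≤ i ≤ N`, `j ≤ N`. -/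
def HNplus {H : Type*} [NormedAddCommGroup H] [InnerProductSpace ℂ H] [CompleteSpace H]
    (A : H →L[ℂ] H) (φ : H) (N : ℕ) : Submodule ℂ H :=
  Submodule.span ℂ {x : H | ∃ i, 1 ≤ i ∧ i ≤ N ∧ ∃ j ≤ N, x = (A ^ i) (((adjoint A) ^ j) φ)}

instance {H : Type*} [NormedAddCommGroup H] [InnerProductSpace ℂ H] [CompleteSpace H]
    (A : H →L[ℂ] H) (φ : H) (N : ℕ) : FiniteDimensional ℂ (HN A φ N) := by
  apply FiniteDimensional.span_of_finite
  apply Set.Finite.subset (Set.Finite.image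
    (fun p : ℕ × ℕ => (A ^ p.1) (((adjoint A) ^ p.2) φ))
    ((Set.finite_Iic N).prod (Set.finite_Iic N)))
  rintro x ⟨i, hi, j, hj, rfl⟩
  exact ⟨(i, j), ⟨hi, hj⟩, rfl⟩

section ScaledUnitary

variable {𝕜 V : Type*} [RCLike 𝕜] [NormedAddCommGroup V] [InnerProductSpace 𝕜 V]

theorem ContinuousLinearMap.norm_apply_eq_sqrt_mul_norm [CompleteSpace V] {W : Type*}
    [NormedAddCommGroup W] [InnerProductSpace 𝕜 W] [CompleteSpace W] {A : V →L[𝕜] W} {r : ℝ}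
    (hA : adjoint A ∘L A = (r : 𝕜) • ContinuousLinearMap.id 𝕜 V) (x : V) :
    ‖A x‖ = √r * ‖x‖ := by
  rw [apply_norm_eq_sqrt_inner_adjoint_left, hA, smul_apply, id_apply, inner_smul_left,
    RCLike.conj_ofReal, inner_self_eq_norm_sq_to_K, ← RCLike.ofReal_pow, ← RCLike.ofReal_mul,
    RCLike.ofReal_re, Real.sqrt_mul' _ (sq_nonneg _), Real.sqrt_sq (norm_nonneg _)]

variable [FiniteDimensional 𝕜 V]

theorem LinearMap.exists_adjoint_comp_self_eq_smul_extending (S : Submodule 𝕜 V)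
    (f : S →ₗ[𝕜] V) {r : ℝ} (hr : 0 < r) (hf : ∀ x, ‖f x‖ = √r * ‖x‖) :
    ∃ T : V →ₗ[𝕜] V, adjoint T ∘ₗ T = (r : 𝕜) • LinearMap.id ∧
      T ∘ₗ adjoint T = (r : 𝕜) • LinearMap.id ∧ ∀ x : S, T x = f x := by
  have hsqrt : 0 < √r := Real.sqrt_pos.2 hr
  let L : S →ₗᵢ[𝕜] V :=
    { toLinearMap := ((√r)⁻¹ : 𝕜) • f
      norm_map' := fun x => by
        rw [LinearMap.smul_apply, norm_smul, hf, norm_inv, RCLike.norm_ofReal, abs_of_pos hsqrt,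
          inv_mul_cancel_left₀ hsqrt.ne'] }
  let u : V ≃ₗᵢ[𝕜] V := L.extend.toLinearIsometryEquiv rfl
  have hsq : (√r : 𝕜) * √r = r := by exact_mod_cast Real.mul_self_sqrt hr.le
  have hadj : adjoint ((√r : 𝕜) • u.toLinearMap) = (√r : 𝕜) • u.symm.toLinearMap := by
    rw [map_smulₛₗ, u.adjoint_toLinearMap_eq_symm, RCLike.conj_ofReal]
  refine ⟨(√r : 𝕜) • u.toLinearMap, ?_, ?_, fun x => ?_⟩
  · ext x
    simp [hadj, smul_smul, hsq]
  · ext x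
    simp [hadj, smul_smul, hsq]
  · have hux : u x = L x := L.extend_apply x
    simp [hux, L, smul_smul, hsqrt.ne']

end ScaledUnitary

section KrylovSpans

variable {H : Type*} [NormedAddCommGroup H] [InnerProductSpace ℂ H] [CompleteSpace H]
  (A : H →L[ℂ] H) (φ : H) (N : ℕ)

theorem HNminus_le_HN : HNminus A φ N ≤ HN A φ N := by
  apply Submodule.span_mono
  rintro x ⟨i, hi, j, hj, rfl⟩
  exact ⟨i, hi.le, j, hj, rfl⟩

theorem map_HNminus_le_HN : (HNminus A φ N).map A.toLinearMap ≤ HN A φ N := by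
  rw [HNminus, Submodule.map_span, Submodule.span_le]
  rintro _ ⟨_, ⟨i, hi, j, hj, rfl⟩, rfl⟩
  exact Submodule.subset_span ⟨i + 1, hi, j, hj, by rw [pow_succ']; rfl⟩

theorem HNplus_le_map_HNminus : HNplus A φ N ≤ (HNminus A φ N).map A.toLinearMap := by
  rw [HNplus, Submodule.span_le]
  rintro _ ⟨i, hi, hiN, j, hj, rfl⟩
  obtain ⟨i, rfl⟩ := Nat.exists_eq_add_of_le' hi
  exact ⟨_, Submodule.subset_span ⟨i, hiN, j, hj, rfl⟩, by rw [pow_succ']; rfl⟩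

end KrylovSpans

theorem stmt16
    {H : Type*} [NormedAddCommGroup H] [InnerProductSpace ℂ H] [CompleteSpace H]
    (r : ℝ) (hr : 0 < r) (A : H →L[ℂ] H)
    (h2 : adjoint A ∘L A = (r : ℂ) • ContinuousLinearMap.id ℂ H)
    (φ : H) (N : ℕ) :
    ∃ T : HN A φ N →ₗ[ℂ] HN A φ N,
      (LinearMap.adjoint T) ∘ₗ T = (r : ℂ) • LinearMap.id ∧
      T ∘ₗ (LinearMap.adjoint T) = (r : ℂ) • LinearMap.id ∧
      (∀ x : HN A φ N, (x : H) ∈ HNminus A φ N → (T x : H) = A x) ∧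
      (∀ x : HN A φ N, (x : H) ∈ HNplus A φ N →
        ((LinearMap.adjoint T) x : H) = adjoint A x) := by
  set V := HN A φ N
  let S : Submodule ℂ V := (HNminus A φ N).comap V.subtype
  let f : S →ₗ[ℂ] V := (A.toLinearMap ∘ₗ V.subtype ∘ₗ S.subtype).codRestrict V
    fun x => map_HNminus_le_HN A φ N ⟨_, x.2, rfl⟩
  obtain ⟨T, hTT, hTT', hTf⟩ := LinearMap.exists_adjoint_comp_self_eq_smul_extending S f hr
    fun x => A.norm_apply_eq_sqrt_mul_norm h2 _
  have hTA : ∀ x : V, (x : H) ∈ HNminus A φ N → (T x : H) = A x := fun x hx =>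
    congrArg Subtype.val (hTf ⟨x, hx⟩)
  refine ⟨T, hTT, hTT', hTA, fun x hx => ?_⟩
  obtain ⟨y, hy, hyx : A y = x⟩ := HNplus_le_map_HNminus A φ N hx
  have hTy : T ⟨y, HNminus_le_HN A φ N hy⟩ = x := Subtype.ext ((hTA _ hy).trans hyx)
  calc (LinearMap.adjoint T x : H) = (r : ℂ) • y := by
        rw [← hTy, ← LinearMap.comp_apply, hTT]; rfl
    _ = adjoint A x := by rw [← hyx, ← ContinuousLinearMap.comp_apply, h2]; rfl
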